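/- Suppose φ, ψ ∈ L¹∘(0,∞) ∩ L²(0,∞). Then for every z ∈ ℂ with Re z ≠ 1/2: (i) the integrals defining y₁ᶻ(x) and y₂ᶻ(x) converge absolutely with |y₁ᶻ(x)| ≤ ‖φ‖_{L¹∘}·x^{−1/2} and |y₂ᶻ(x)| ≤ ‖ψ‖_{L¹∘}·x^{−1/2} for all x > 0; (ii) y₁ᶻ and y₂ᶻ belong to L²(0,∞), with ‖y₁ᶻ‖_{L²(0,∞)} ≤ (2/|Re z − 1/2|)·‖φ‖_{L²(0,∞)} and ‖y₂ᶻ‖_{L²(0,∞)} ≤ (2/|Re z − 1/2|)·‖ψ‖_{L²(0,∞)}. -/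

import Mathlib

open MeasureTheory Set Complex Filter Topology

/-- `f ∈ L¹∘(0,∞)`: `∫_0^∞ |f(x)| x^{−1/2} dx < ∞`. -/
def MemL1c (f : ℝ → ℂ) : Prop :=
  IntegrableOn (fun x => f x / ((Real.sqrt x : ℝ) : ℂ)) (Ioi 0) volume

/-- `‖f‖_{L¹∘} = ∫_0^∞ |f(x)| x^{−1/2} dx`. -/
noncomputable def l1cNorm (f : ℝ → ℂ) : ℝ :=
  ∫ x in Ioi (0:ℝ), ‖f x‖ / Real.sqrt x

/-- `y₁ᶻ(x)`: for `Re z < 1/2`, `−∫_x^∞ (x/s)^{−z} φ(s) ds/s`;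
for `Re z > 1/2`, `∫_0^x (x/s)^{−z} φ(s) ds/s`. -/
noncomputable def Y₁ (φ : ℝ → ℂ) (z : ℂ) (x : ℝ) : ℂ :=
  if z.re < 1/2 then -∫ s in Ioi x, ((x / s : ℝ) : ℂ) ^ (-z) * φ s / (s : ℂ)
  else ∫ s in Ioo 0 x, ((x / s : ℝ) : ℂ) ^ (-z) * φ s / (s : ℂ)

/-- `y₂ᶻ(x)`: for `Re z < 1/2`, `∫_0^x (x/s)^{z−1} ψ(s) ds/s`;
for `Re z > 1/2`, `−∫_x^∞ (x/s)^{z−1} ψ(s) ds/s`. -/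
noncomputable def Y₂ (ψ : ℝ → ℂ) (z : ℂ) (x : ℝ) : ℂ :=
  if z.re < 1/2 then ∫ s in Ioo 0 x, ((x / s : ℝ) : ℂ) ^ (z - 1) * ψ s / (s : ℂ)
  else -∫ s in Ioi x, ((x / s : ℝ) : ℂ) ^ (z - 1) * ψ s / (s : ℂ)

/-!
With `w = -z` or `w = z - 1`, each of `y₁ᶻ`, `y₂ᶻ` is, up to sign, either the tail operator
`∫_x^∞ (x/s)^w φ(s) ds/s` with `Re w > -1/2` or the head operator `∫_0^x (x/s)^w φ(s) ds/s` with
`Re w < -1/2`. On the range of integration `|(x/s)^w| ≤ (x/s)^(-1/2)`, so the integrand is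
dominated by `x^(-1/2) |φ(s)| s^(-1/2)`: this gives absolute convergence and the pointwise bound.

For the `L²` bound, the tail kernel `K(x,s) = 1_{x<s} (x/s)^t / s` (`t = Re w`, `ε = t + 1/2 > 0`)
satisfies `K² = K₁ K₂` with `K₁ = 1_{x<s} (x/s)^ε / s` and `K₂ = 1_{x<s} (x/s)^(ε-1) / s`, whose
rows, resp. columns, all integrate to `1/ε`. Schur's test (Cauchy–Schwarz in `s`, then Tonelli)
bounds the operator on `L²(0,∞)` by `1/ε = 1/|Re z - 1/2|`. The head kernel is the transpose of
the tail kernel with `t` replaced by `-t - 1`, so the same test applies with the roles of `K₁` and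
`K₂` exchanged.
-/

open Function
open scoped ENNReal

section

variable {α β : Type*} [MeasurableSpace α] [MeasurableSpace β] {μ : Measure α} {ν : Measure β}

theorem lintegral_mul_sq_le_of_sq_le_mul {K K₁ K₂ g : β → ℝ≥0∞} (h₁ : AEMeasurable K₁ ν)
    (h₂ : AEMeasurable K₂ ν) (hg : AEMeasurable g ν) (hK : ∀ᵐ y ∂ν, K y ^ 2 ≤ K₁ y * K₂ y) :
    (∫⁻ y, K y * g y ∂ν) ^ 2 ≤ (∫⁻ y, K₁ y ∂ν) * ∫⁻ y, K₂ y * g y ^ 2 ∂ν := by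
  have hsqrt : ∀ a : ℝ≥0∞, (a ^ (1 / 2 : ℝ)) ^ (2 : ℝ) = a := fun a => by
    rw [← ENNReal.rpow_mul]; norm_num
  have hK' : ∀ᵐ y ∂ν, K y * g y ≤ K₁ y ^ (1 / 2 : ℝ) * (K₂ y ^ (1 / 2 : ℝ) * g y) := by
    filter_upwards [hK] with y hy
    rw [← mul_assoc, ← ENNReal.mul_rpow_of_nonneg _ _ (by norm_num)]
    gcongr
    calc K y = (K y ^ 2) ^ (1 / 2 : ℝ) := by
          rw [← ENNReal.rpow_natCast, ← ENNReal.rpow_mul]; norm_num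
      _ ≤ (K₁ y * K₂ y) ^ (1 / 2 : ℝ) := by gcongr
  calc (∫⁻ y, K y * g y ∂ν) ^ 2
      ≤ (∫⁻ y, K₁ y ^ (1 / 2 : ℝ) * (K₂ y ^ (1 / 2 : ℝ) * g y) ∂ν) ^ 2 := by
        gcongr 1; exact lintegral_mono_ae hK'
    _ ≤ ((∫⁻ y, (K₁ y ^ (1 / 2 : ℝ)) ^ (2 : ℝ) ∂ν) ^ (1 / 2 : ℝ) *
          (∫⁻ y, (K₂ y ^ (1 / 2 : ℝ) * g y) ^ (2 : ℝ) ∂ν) ^ (1 / 2 : ℝ)) ^ 2 := by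
        gcongr 1
        exact ENNReal.lintegral_mul_le_Lp_mul_Lq ν .two_two (h₁.pow_const _)
          ((h₂.pow_const _).mul hg)
    _ = (∫⁻ y, K₁ y ∂ν) * ∫⁻ y, K₂ y * g y ^ 2 ∂ν := by
        simp only [ENNReal.mul_rpow_of_nonneg _ _ zero_le_two, hsqrt, ENNReal.rpow_two]
        rw [mul_pow, ← ENNReal.rpow_natCast, ← ENNReal.rpow_natCast (_ ^ _), ← ENNReal.rpow_mul,
          ← ENNReal.rpow_mul]
        norm_num

theorem lintegral_sq_lintegral_mul_le_of_schur [SFinite μ] [SFinite ν] {K K₁ K₂ : α → β → ℝ≥0∞}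
    (h₁ : Measurable (uncurry K₁)) (h₂ : Measurable (uncurry K₂)) {g : β → ℝ≥0∞}
    (hg : AEMeasurable g ν) {A B : ℝ≥0∞} (hK : ∀ᵐ x ∂μ, ∀ᵐ y ∂ν, K x y ^ 2 ≤ K₁ x y * K₂ x y)
    (hA : ∀ᵐ x ∂μ, ∫⁻ y, K₁ x y ∂ν ≤ A) (hB : ∀ᵐ y ∂ν, ∫⁻ x, K₂ x y ∂μ ≤ B) :
    ∫⁻ x, (∫⁻ y, K x y * g y ∂ν) ^ 2 ∂μ ≤ A * B * ∫⁻ y, g y ^ 2 ∂ν := by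
  have hK₂g : AEMeasurable (fun p : α × β => K₂ p.1 p.2 * g p.2 ^ 2) (μ.prod ν) :=
    h₂.aemeasurable.mul (hg.comp_snd.pow_const 2)
  calc ∫⁻ x, (∫⁻ y, K x y * g y ∂ν) ^ 2 ∂μ
      ≤ ∫⁻ x, A * ∫⁻ y, K₂ x y * g y ^ 2 ∂ν ∂μ := by
        refine lintegral_mono_ae ?_
        filter_upwards [hK, hA] with x hKx hAx
        exact (lintegral_mul_sq_le_of_sq_le_mul h₁.of_uncurry_left.aemeasurable
          h₂.of_uncurry_left.aemeasurable hg hKx).trans (by gcongr)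
    _ = A * ∫⁻ y, (∫⁻ x, K₂ x y ∂μ) * g y ^ 2 ∂ν := by
        rw [lintegral_const_mul'' _ hK₂g.lintegral_prod_right', lintegral_lintegral_swap hK₂g]
        simp_rw [lintegral_mul_const _ h₂.of_uncurry_right]
    _ ≤ A * ∫⁻ y, B * g y ^ 2 ∂ν := by
        gcongr 1
        exact lintegral_mono_ae (hB.mono fun y hy => by gcongr)
    _ = A * B * ∫⁻ y, g y ^ 2 ∂ν := by
        rw [lintegral_const_mul'' _ (hg.pow_const 2), mul_assoc]


theorem MeasureTheory.AEStronglyMeasurable.setIntegral_prod_slice {E : Type*}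
    [NormedAddCommGroup E] [NormedSpace ℝ E] [SFinite ν] {f : α × β → E}
    (hf : AEStronglyMeasurable f (μ.prod ν)) {D : Set (α × β)} (hD : MeasurableSet D) :
    AEStronglyMeasurable (fun x => ∫ y in Prod.mk x ⁻¹' D, f (x, y) ∂ν) μ :=
  (hf.indicator hD).integral_prod_right'.congr <| ae_of_all _ fun _ =>
    integral_indicator (measurable_prodMk_left hD)

theorem sq_eLpNorm_two {E : Type*} [NormedAddCommGroup E] (f : α → E) :
    eLpNorm f 2 μ ^ 2 = ∫⁻ x, ‖f x‖ₑ ^ 2 ∂μ := by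
  simpa using eLpNorm_nnreal_pow_eq_lintegral (f := f) (μ := μ) (p := 2) two_ne_zero

theorem eLpNorm_two_le_of_enorm_le {E F : Type*} [NormedAddCommGroup E] [NormedAddCommGroup F]
    {f : α → E} {g : α → F} {G : α → ℝ≥0∞} {C : ℝ≥0∞} (hfG : ∀ᵐ x ∂μ, ‖f x‖ₑ ≤ G x)
    (hG : ∫⁻ x, G x ^ 2 ∂μ ≤ C ^ 2 * ∫⁻ x, ‖g x‖ₑ ^ 2 ∂μ) :
    eLpNorm f 2 μ ≤ C * eLpNorm g 2 μ := by
  rw [← ENNReal.pow_le_pow_left_iff two_ne_zero, mul_pow, sq_eLpNorm_two, sq_eLpNorm_two]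
  exact (lintegral_mono_ae (hfG.mono fun x hx => by gcongr)).trans hG

end

noncomputable def hardyKernel (a x s : ℝ) : ℝ≥0∞ :=
  if x < s then ENNReal.ofReal ((x / s) ^ a / s) else 0

theorem measurable_hardyKernel (a : ℝ) : Measurable (uncurry (hardyKernel a)) :=
  Measurable.ite (measurableSet_lt measurable_fst measurable_snd) (by fun_prop) measurable_const

theorem measurable_hardyKernel_swap (a : ℝ) : Measurable (uncurry fun x s => hardyKernel a s x) :=
  (measurable_hardyKernel a).comp measurable_swap

theorem setLIntegral_hardyKernel_mul {x : ℝ} (hx : 0 ≤ x) (a : ℝ) (g : ℝ → ℝ≥0∞) :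
    ∫⁻ s in Ioi 0, hardyKernel a x s * g s
      = ∫⁻ s in Ioi x, ENNReal.ofReal ((x / s) ^ a / s) * g s := by
  have h : ∀ s, hardyKernel a x s * g s
      = (Ioi x).indicator (fun s => ENNReal.ofReal ((x / s) ^ a / s) * g s) s := fun s => by
    simp only [hardyKernel, indicator, mem_Ioi, ite_mul, zero_mul]
  rw [lintegral_congr h, lintegral_indicator measurableSet_Ioi,
    Measure.restrict_restrict measurableSet_Ioi, inter_eq_left.mpr (Ioi_subset_Ioi hx)]

theorem setLIntegral_hardyKernel_swap_mul (x a : ℝ) (g : ℝ → ℝ≥0∞) :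
    ∫⁻ s in Ioi 0, hardyKernel a s x * g s
      = ∫⁻ s in Ioo 0 x, ENNReal.ofReal ((s / x) ^ a / x) * g s := by
  have h : ∀ s, hardyKernel a s x * g s
      = (Iio x).indicator (fun s => ENNReal.ofReal ((s / x) ^ a / x) * g s) s := fun s => by
    simp only [hardyKernel, indicator, mem_Iio, ite_mul, zero_mul]
  rw [lintegral_congr h, lintegral_indicator measurableSet_Iio,
    Measure.restrict_restrict measurableSet_Iio, Iio_inter_Ioi]

theorem setLIntegral_hardyKernel {a x : ℝ} (ha : 0 < a) (hx : 0 < x) :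
    ∫⁻ s in Ioi 0, hardyKernel a x s = ENNReal.ofReal (1 / a) := by
  have hrpow : EqOn (fun s => (x / s) ^ a / s) (fun s => x ^ a * s ^ (-a - 1)) (Ioi x) := by
    intro s hs
    have hs : 0 < s := hx.trans hs
    simp only [Real.div_rpow hx.le hs.le, Real.rpow_sub_one hs.ne', Real.rpow_neg hs.le]
    field_simp
  have hint : IntegrableOn (fun s => (x / s) ^ a / s) (Ioi x) :=
    IntegrableOn.congr_fun
      ((integrableOn_Ioi_rpow_of_lt (by linarith : -a - 1 < -1) hx).const_mul _)
      hrpow.symm measurableSet_Ioi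
  have h := setLIntegral_hardyKernel_mul hx.le a 1
  simp only [Pi.one_apply, mul_one] at h
  rw [h, ← ofReal_integral_eq_lintegral_ofReal hint
    ((ae_restrict_mem measurableSet_Ioi).mono fun s hs => by
      have : 0 < s := hx.trans hs
      positivity),
    setIntegral_congr_fun measurableSet_Ioi hrpow, integral_const_mul,
    integral_Ioi_rpow_of_lt (by linarith) hx]
  congr 1
  rw [show -a - 1 + 1 = -a by ring, Real.rpow_neg hx.le]
  field_simp

theorem setLIntegral_hardyKernel_swap {b s : ℝ} (hb : -1 < b) (hs : 0 < s) :
    ∫⁻ x in Ioi 0, hardyKernel b x s = ENNReal.ofReal (1 / (b + 1)) := by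
  have hrpow : EqOn (fun x => (x / s) ^ b / s) (fun x => s ^ (-b - 1) * x ^ b) (Ioo 0 s) := by
    intro x hx
    simp only [Real.div_rpow hx.1.le hs.le, Real.rpow_sub_one hs.ne', Real.rpow_neg hs.le]
    field_simp
  have hint : IntegrableOn (fun x => (x / s) ^ b / s) (Ioo 0 s) :=
    IntegrableOn.congr_fun
      (((intervalIntegral.intervalIntegrable_rpow' hb).1.mono_set Ioo_subset_Ioc_self).const_mul _)
      hrpow.symm measurableSet_Ioo
  have h := setLIntegral_hardyKernel_swap_mul s b 1
  simp only [Pi.one_apply, mul_one] at h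
  rw [h, ← ofReal_integral_eq_lintegral_ofReal hint
    ((ae_restrict_mem measurableSet_Ioo).mono fun x hx => by
      have : 0 < x := hx.1
      positivity),
    setIntegral_congr_fun measurableSet_Ioo hrpow, integral_const_mul,
    ← integral_Ioc_eq_integral_Ioo, ← intervalIntegral.integral_of_le hs.le,
    integral_rpow (Or.inl hb), Real.zero_rpow (by linarith)]
  congr 1
  rw [sub_zero, Real.rpow_add hs, Real.rpow_one, Real.rpow_sub_one hs.ne', Real.rpow_neg hs.le]
  field_simp

theorem hardyKernel_sq (t : ℝ) {x s : ℝ} (hx : 0 < x) (hs : 0 < s) :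
    hardyKernel t x s ^ 2 = hardyKernel (t + 1 / 2) x s * hardyKernel (t - 1 / 2) x s := by
  unfold hardyKernel
  split_ifs
  · have hxs : 0 < x / s := div_pos hx hs
    rw [← ENNReal.ofReal_pow (by positivity), ← ENNReal.ofReal_mul (by positivity)]
    congr 1
    rw [div_mul_div_comm, ← Real.rpow_add hxs, div_pow, ← Real.rpow_natCast,
      ← Real.rpow_mul hxs.le]
    ring_nf
  · simp

theorem lintegral_sq_hardyKernel_le {t : ℝ} (ht : 0 < t + 1 / 2) {g : ℝ → ℝ≥0∞}
    (hg : AEMeasurable g (volume.restrict (Ioi 0))) :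
    ∫⁻ x in Ioi 0, (∫⁻ s in Ioi 0, hardyKernel t x s * g s) ^ 2
      ≤ ENNReal.ofReal (1 / (t + 1 / 2)) ^ 2 * ∫⁻ s in Ioi 0, g s ^ 2 := by
  rw [sq (ENNReal.ofReal _)]
  refine lintegral_sq_lintegral_mul_le_of_schur (measurable_hardyKernel (t + 1 / 2))
    (measurable_hardyKernel (t - 1 / 2)) hg ?_ ?_ ?_
  · filter_upwards [ae_restrict_mem measurableSet_Ioi] with x hx
    filter_upwards [ae_restrict_mem measurableSet_Ioi] with s hs
    exact (hardyKernel_sq t hx hs).le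
  · filter_upwards [ae_restrict_mem measurableSet_Ioi] with x hx
    exact (setLIntegral_hardyKernel ht hx).le
  · filter_upwards [ae_restrict_mem measurableSet_Ioi] with s hs
    rw [setLIntegral_hardyKernel_swap (by linarith) hs, show t - 1 / 2 + 1 = t + 1 / 2 by ring]

theorem lintegral_sq_hardyKernel_swap_le {t : ℝ} (ht : 0 < t + 1 / 2) {g : ℝ → ℝ≥0∞}
    (hg : AEMeasurable g (volume.restrict (Ioi 0))) :
    ∫⁻ x in Ioi 0, (∫⁻ s in Ioi 0, hardyKernel t s x * g s) ^ 2
      ≤ ENNReal.ofReal (1 / (t + 1 / 2)) ^ 2 * ∫⁻ s in Ioi 0, g s ^ 2 := by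
  rw [sq (ENNReal.ofReal _)]
  refine lintegral_sq_lintegral_mul_le_of_schur (K₁ := fun x s => hardyKernel (t - 1 / 2) s x)
    (K₂ := fun x s => hardyKernel (t + 1 / 2) s x)
    (measurable_hardyKernel_swap _) (measurable_hardyKernel_swap _) hg ?_ ?_ ?_
  · filter_upwards [ae_restrict_mem measurableSet_Ioi] with x hx
    filter_upwards [ae_restrict_mem measurableSet_Ioi] with s hs
    exact (hardyKernel_sq t hs hx).trans_le (mul_comm _ _).le
  · filter_upwards [ae_restrict_mem measurableSet_Ioi] with x hx
    rw [setLIntegral_hardyKernel_swap (by linarith) hx, show t - 1 / 2 + 1 = t + 1 / 2 by ring]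
  · filter_upwards [ae_restrict_mem measurableSet_Ioi] with s hs
    exact (setLIntegral_hardyKernel ht hs).le

noncomputable def hardyIntegrand (w : ℂ) (φ : ℝ → ℂ) (x s : ℝ) : ℂ :=
  ((x / s : ℝ) : ℂ) ^ w * φ s / (s : ℂ)

noncomputable def hardyTail (w : ℂ) (φ : ℝ → ℂ) (x : ℝ) : ℂ :=
  ∫ s in Ioi x, hardyIntegrand w φ x s

noncomputable def hardyHead (w : ℂ) (φ : ℝ → ℂ) (x : ℝ) : ℂ :=
  ∫ s in Ioo 0 x, hardyIntegrand w φ x s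

section hardyIntegrand

variable {w : ℂ} {φ : ℝ → ℂ} {x s : ℝ}

theorem norm_hardyIntegrand (hx : 0 < x) (hs : 0 < s) :
    ‖hardyIntegrand w φ x s‖ = (x / s) ^ w.re / s * ‖φ s‖ := by
  rw [hardyIntegrand, norm_div, norm_mul, Complex.norm_cpow_eq_rpow_re_of_pos (div_pos hx hs),
    Complex.norm_real, Real.norm_of_nonneg hs.le]
  ring

theorem norm_hardyIntegrand_le (hx : 0 < x) (hs : 0 < s)
    (hw : (x / s) ^ w.re ≤ (x / s) ^ (-(1 / 2) : ℝ)) :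
    ‖hardyIntegrand w φ x s‖ ≤ (√x)⁻¹ * (‖φ s‖ / √s) := by
  have hsqrt : (x / s) ^ (-(1 / 2) : ℝ) / s = (√x)⁻¹ * (√s)⁻¹ := by
    rw [Real.rpow_neg (div_pos hx hs).le, ← Real.sqrt_eq_rpow, Real.sqrt_div' _ hs.le]
    field_simp
    rw [Real.sq_sqrt hs.le]
  rw [norm_hardyIntegrand hx hs]
  calc (x / s) ^ w.re / s * ‖φ s‖ ≤ (x / s) ^ (-(1 / 2) : ℝ) / s * ‖φ s‖ := by gcongr
    _ = (√x)⁻¹ * (‖φ s‖ / √s) := by rw [hsqrt]; ring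

theorem MemL1c.integrableOn_norm_div_sqrt (hφ : MemL1c φ) :
    IntegrableOn (fun s => ‖φ s‖ / √s) (Ioi 0) := by
  simpa [MemL1c, IntegrableOn, Complex.norm_real, abs_of_nonneg (Real.sqrt_nonneg _)] using hφ.norm

theorem MemL1c.aestronglyMeasurable (hφ : MemL1c φ) :
    AEStronglyMeasurable φ (volume.restrict (Ioi 0)) := by
  refine (Integrable.aestronglyMeasurable hφ |>.mul
    (continuous_ofReal.comp Real.continuous_sqrt).aestronglyMeasurable).congr ?_
  filter_upwards [ae_restrict_mem measurableSet_Ioi] with s hs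
  have : (√s : ℂ) ≠ 0 := by exact_mod_cast (Real.sqrt_pos.2 hs).ne'
  exact div_mul_cancel₀ _ this

theorem aestronglyMeasurable_hardyIntegrand {μ : Measure ℝ} (hφ : AEStronglyMeasurable φ μ) :
    AEStronglyMeasurable (hardyIntegrand w φ x) μ :=
  ((Measurable.aestronglyMeasurable (f := fun s : ℝ => ((x / s : ℝ) : ℂ) ^ w)
    (by fun_prop)).mul hφ).div₀ (Measurable.aestronglyMeasurable (f := fun s : ℝ => (s : ℂ))
    (by fun_prop))

theorem aestronglyMeasurable_uncurry_hardyIntegrand {μ ν : Measure ℝ} [SFinite ν]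
    (hφ : AEStronglyMeasurable φ ν) :
    AEStronglyMeasurable (fun p : ℝ × ℝ => hardyIntegrand w φ p.1 p.2) (μ.prod ν) :=
  ((Measurable.aestronglyMeasurable (f := fun p : ℝ × ℝ => ((p.1 / p.2 : ℝ) : ℂ) ^ w)
    (by fun_prop)).mul hφ.comp_snd).div₀
    (Measurable.aestronglyMeasurable (f := fun p : ℝ × ℝ => (p.2 : ℂ)) (by fun_prop))

variable {S : Set ℝ}

theorem integrableOn_hardyIntegrand (hS : MeasurableSet S) (hS0 : S ⊆ Ioi 0) (hφ : MemL1c φ)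
    (hx : 0 < x) (hw : ∀ s ∈ S, (x / s) ^ w.re ≤ (x / s) ^ (-(1 / 2) : ℝ)) :
    IntegrableOn (hardyIntegrand w φ x) S :=
  Integrable.mono' ((hφ.integrableOn_norm_div_sqrt.mono_set hS0).const_mul _)
    (aestronglyMeasurable_hardyIntegrand
      (hφ.aestronglyMeasurable.mono_measure (Measure.restrict_mono hS0 le_rfl)))
    ((ae_restrict_mem hS).mono fun s hs => norm_hardyIntegrand_le hx (hS0 hs) (hw s hs))

theorem norm_setIntegral_hardyIntegrand_le (hS : MeasurableSet S) (hS0 : S ⊆ Ioi 0)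
    (hφ : MemL1c φ) (hx : 0 < x) (hw : ∀ s ∈ S, (x / s) ^ w.re ≤ (x / s) ^ (-(1 / 2) : ℝ)) :
    ‖∫ s in S, hardyIntegrand w φ x s‖ ≤ l1cNorm φ / √x := by
  have hint := hφ.integrableOn_norm_div_sqrt
  calc ‖∫ s in S, hardyIntegrand w φ x s‖ ≤ ∫ s in S, (√x)⁻¹ * (‖φ s‖ / √s) :=
        norm_integral_le_of_norm_le ((hint.mono_set hS0).const_mul _)
          ((ae_restrict_mem hS).mono fun s hs => norm_hardyIntegrand_le hx (hS0 hs) (hw s hs))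
    _ = (√x)⁻¹ * ∫ s in S, ‖φ s‖ / √s := integral_const_mul _ _
    _ ≤ (√x)⁻¹ * l1cNorm φ := by
        gcongr
        exact setIntegral_mono_set hint (ae_of_all _ fun s => by positivity) hS0.eventuallyLE
    _ = l1cNorm φ / √x := by ring

theorem enorm_setIntegral_hardyIntegrand_le (hS : MeasurableSet S) (hS0 : S ⊆ Ioi 0)
    (hx : 0 < x) :
    ‖∫ s in S, hardyIntegrand w φ x s‖ₑ ≤ ∫⁻ s in S, ENNReal.ofReal ((x / s) ^ w.re / s) * ‖φ s‖ₑ :=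
  (enorm_integral_le_lintegral_enorm _).trans_eq <| setLIntegral_congr_fun hS fun s hs => by
    have hs := hS0 hs
    rw [← ofReal_norm, norm_hardyIntegrand hx hs,
      ENNReal.ofReal_mul (div_nonneg (Real.rpow_nonneg (div_pos hx hs).le _) hs.le), ofReal_norm]

end hardyIntegrand

section hardyTail

variable {w : ℂ} {φ : ℝ → ℂ} {x : ℝ}

theorem div_rpow_le_div_rpow_neg_half_of_lt {s t : ℝ} (hx : 0 < x) (hxs : x < s)
    (ht : -(1 / 2) ≤ t) : (x / s) ^ t ≤ (x / s) ^ (-(1 / 2) : ℝ) :=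
  Real.rpow_le_rpow_of_exponent_ge (div_pos hx (hx.trans hxs))
    ((div_le_one (hx.trans hxs)).2 hxs.le) ht

theorem integrableOn_hardyIntegrand_Ioi (hw : -(1 / 2) ≤ w.re) (hφ : MemL1c φ) (hx : 0 < x) :
    IntegrableOn (hardyIntegrand w φ x) (Ioi x) :=
  integrableOn_hardyIntegrand measurableSet_Ioi (Ioi_subset_Ioi hx.le) hφ hx
    fun _ hs => div_rpow_le_div_rpow_neg_half_of_lt hx hs hw

theorem norm_hardyTail_le (hw : -(1 / 2) ≤ w.re) (hφ : MemL1c φ) (hx : 0 < x) :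
    ‖hardyTail w φ x‖ ≤ l1cNorm φ / √x :=
  norm_setIntegral_hardyIntegrand_le measurableSet_Ioi (Ioi_subset_Ioi hx.le) hφ hx
    fun _ hs => div_rpow_le_div_rpow_neg_half_of_lt hx hs hw

theorem enorm_hardyTail_le (hx : 0 < x) :
    ‖hardyTail w φ x‖ₑ ≤ ∫⁻ s in Ioi 0, hardyKernel w.re x s * ‖φ s‖ₑ :=
  (enorm_setIntegral_hardyIntegrand_le measurableSet_Ioi (Ioi_subset_Ioi hx.le) hx).trans_eq
    (setLIntegral_hardyKernel_mul hx.le _ _).symm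

theorem aestronglyMeasurable_hardyTail (hφ : AEStronglyMeasurable φ (volume.restrict (Ioi 0))) :
    AEStronglyMeasurable (hardyTail w φ) (volume.restrict (Ioi 0)) := by
  refine ((aestronglyMeasurable_uncurry_hardyIntegrand (w := w) hφ).setIntegral_prod_slice
    (measurableSet_lt measurable_fst measurable_snd)).congr ?_
  filter_upwards [ae_restrict_mem measurableSet_Ioi] with x hx
  change ∫ s in Ioi x, _ ∂(volume.restrict (Ioi 0)) = _
  rw [Measure.restrict_restrict measurableSet_Ioi, inter_eq_left.2 (Ioi_subset_Ioi (le_of_lt hx))]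
  rfl

theorem eLpNorm_hardyTail_le (hw : -(1 / 2) < w.re)
    (hφ : AEStronglyMeasurable φ (volume.restrict (Ioi 0))) :
    eLpNorm (hardyTail w φ) 2 (volume.restrict (Ioi 0))
      ≤ ENNReal.ofReal (1 / |w.re + 1 / 2|) * eLpNorm φ 2 (volume.restrict (Ioi 0)) := by
  rw [abs_of_pos (by linarith)]
  exact eLpNorm_two_le_of_enorm_le
    ((ae_restrict_mem measurableSet_Ioi).mono fun x hx => enorm_hardyTail_le hx)
    (lintegral_sq_hardyKernel_le (by linarith) hφ.enorm)

theorem memLp_hardyTail (hw : -(1 / 2) < w.re) (hφ : MemLp φ 2 (volume.restrict (Ioi 0))) :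
    MemLp (hardyTail w φ) 2 (volume.restrict (Ioi 0)) :=
  ⟨aestronglyMeasurable_hardyTail hφ.1,
    (eLpNorm_hardyTail_le hw hφ.1).trans_lt (ENNReal.mul_lt_top ENNReal.ofReal_lt_top hφ.2)⟩

end hardyTail

section hardyHead

variable {w : ℂ} {φ : ℝ → ℂ} {x : ℝ}

theorem div_rpow_le_div_rpow_neg_half_of_gt {s t : ℝ} (hs : 0 < s) (hsx : s < x)
    (ht : t ≤ -(1 / 2)) : (x / s) ^ t ≤ (x / s) ^ (-(1 / 2) : ℝ) :=
  Real.rpow_le_rpow_of_exponent_le ((one_le_div hs).2 hsx.le) ht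

theorem integrableOn_hardyIntegrand_Ioo (hw : w.re ≤ -(1 / 2)) (hφ : MemL1c φ) (hx : 0 < x) :
    IntegrableOn (hardyIntegrand w φ x) (Ioo 0 x) :=
  integrableOn_hardyIntegrand measurableSet_Ioo Ioo_subset_Ioi_self hφ hx
    fun _ hs => div_rpow_le_div_rpow_neg_half_of_gt hs.1 hs.2 hw

theorem norm_hardyHead_le (hw : w.re ≤ -(1 / 2)) (hφ : MemL1c φ) (hx : 0 < x) :
    ‖hardyHead w φ x‖ ≤ l1cNorm φ / √x :=
  norm_setIntegral_hardyIntegrand_le measurableSet_Ioo Ioo_subset_Ioi_self hφ hx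
    fun _ hs => div_rpow_le_div_rpow_neg_half_of_gt hs.1 hs.2 hw

theorem enorm_hardyHead_le (hx : 0 < x) :
    ‖hardyHead w φ x‖ₑ ≤ ∫⁻ s in Ioi 0, hardyKernel (-w.re - 1) s x * ‖φ s‖ₑ := by
  refine (enorm_setIntegral_hardyIntegrand_le measurableSet_Ioo Ioo_subset_Ioi_self hx).trans_eq ?_
  rw [setLIntegral_hardyKernel_swap_mul]
  refine setLIntegral_congr_fun measurableSet_Ioo fun s hs => ?_
  have hs := hs.1
  congr 2
  rw [show -w.re - 1 = -(w.re + 1) by ring, Real.rpow_neg (by positivity),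
    ← Real.inv_rpow (by positivity), inv_div, Real.rpow_add_one (by positivity)]
  field_simp

theorem aestronglyMeasurable_hardyHead (hφ : AEStronglyMeasurable φ (volume.restrict (Ioi 0))) :
    AEStronglyMeasurable (hardyHead w φ) (volume.restrict (Ioi 0)) := by
  refine ((aestronglyMeasurable_uncurry_hardyIntegrand (w := w) hφ).setIntegral_prod_slice
    (measurableSet_lt measurable_snd measurable_fst)).congr (ae_of_all _ fun x => ?_)
  change ∫ s in Iio x, _ ∂(volume.restrict (Ioi 0)) = _
  rw [Measure.restrict_restrict measurableSet_Iio, Iio_inter_Ioi]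
  rfl

theorem eLpNorm_hardyHead_le (hw : w.re < -(1 / 2))
    (hφ : AEStronglyMeasurable φ (volume.restrict (Ioi 0))) :
    eLpNorm (hardyHead w φ) 2 (volume.restrict (Ioi 0))
      ≤ ENNReal.ofReal (1 / |w.re + 1 / 2|) * eLpNorm φ 2 (volume.restrict (Ioi 0)) := by
  rw [abs_of_neg (by linarith), show -(w.re + 1 / 2) = -w.re - 1 + 1 / 2 by ring]
  exact eLpNorm_two_le_of_enorm_le
    ((ae_restrict_mem measurableSet_Ioi).mono fun x hx => enorm_hardyHead_le hx)
    (lintegral_sq_hardyKernel_swap_le (by linarith) hφ.enorm)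

theorem memLp_hardyHead (hw : w.re < -(1 / 2)) (hφ : MemLp φ 2 (volume.restrict (Ioi 0))) :
    MemLp (hardyHead w φ) 2 (volume.restrict (Ioi 0)) :=
  ⟨aestronglyMeasurable_hardyHead hφ.1,
    (eLpNorm_hardyHead_le hw hφ.1).trans_lt (ENNReal.mul_lt_top ENNReal.ofReal_lt_top hφ.2)⟩

end hardyHead

section Y

variable {φ : ℝ → ℂ} {z : ℂ} {x : ℝ}

theorem Y₁_eq_neg_hardyTail (hz : z.re < 1 / 2) : Y₁ φ z = -hardyTail (-z) φ :=
  funext fun _ => if_pos hz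

theorem Y₁_eq_hardyHead (hz : ¬z.re < 1 / 2) : Y₁ φ z = hardyHead (-z) φ :=
  funext fun _ => if_neg hz

theorem Y₂_eq_hardyHead (hz : z.re < 1 / 2) : Y₂ φ z = hardyHead (z - 1) φ :=
  funext fun _ => if_pos hz

theorem Y₂_eq_neg_hardyTail (hz : ¬z.re < 1 / 2) : Y₂ φ z = -hardyTail (z - 1) φ :=
  funext fun _ => if_neg hz

theorem norm_Y₁_le (hφ : MemL1c φ) (hx : 0 < x) : ‖Y₁ φ z x‖ ≤ l1cNorm φ / √x := by
  by_cases hz : z.re < 1 / 2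
  · rw [Y₁_eq_neg_hardyTail hz, Pi.neg_apply, norm_neg]
    exact norm_hardyTail_le (by rw [neg_re]; linarith) hφ hx
  · rw [Y₁_eq_hardyHead hz]
    exact norm_hardyHead_le (by rw [neg_re]; linarith) hφ hx

theorem norm_Y₂_le (hφ : MemL1c φ) (hx : 0 < x) : ‖Y₂ φ z x‖ ≤ l1cNorm φ / √x := by
  by_cases hz : z.re < 1 / 2
  · rw [Y₂_eq_hardyHead hz]
    exact norm_hardyHead_le (by rw [sub_re, one_re]; linarith) hφ hx
  · rw [Y₂_eq_neg_hardyTail hz, Pi.neg_apply, norm_neg]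
    exact norm_hardyTail_le (by rw [sub_re, one_re]; linarith) hφ hx

theorem eLpNorm_Y₁_le (hφ : AEStronglyMeasurable φ (volume.restrict (Ioi 0))) (hz : z.re ≠ 1 / 2) :
    eLpNorm (Y₁ φ z) 2 (volume.restrict (Ioi 0))
      ≤ ENNReal.ofReal (1 / |z.re - 1 / 2|) * eLpNorm φ 2 (volume.restrict (Ioi 0)) := by
  rw [← abs_neg, show -(z.re - 1 / 2) = (-z).re + 1 / 2 by rw [neg_re]; ring]
  rcases hz.lt_or_gt with hz | hz
  · rw [Y₁_eq_neg_hardyTail hz, eLpNorm_neg]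
    exact eLpNorm_hardyTail_le (by rw [neg_re]; linarith) hφ
  · rw [Y₁_eq_hardyHead hz.not_gt]
    exact eLpNorm_hardyHead_le (by rw [neg_re]; linarith) hφ

theorem eLpNorm_Y₂_le (hφ : AEStronglyMeasurable φ (volume.restrict (Ioi 0))) (hz : z.re ≠ 1 / 2) :
    eLpNorm (Y₂ φ z) 2 (volume.restrict (Ioi 0))
      ≤ ENNReal.ofReal (1 / |z.re - 1 / 2|) * eLpNorm φ 2 (volume.restrict (Ioi 0)) := by
  rw [show z.re - 1 / 2 = (z - 1).re + 1 / 2 by rw [sub_re, one_re]; ring]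
  rcases hz.lt_or_gt with hz | hz
  · rw [Y₂_eq_hardyHead hz]
    exact eLpNorm_hardyHead_le (by rw [sub_re, one_re]; linarith) hφ
  · rw [Y₂_eq_neg_hardyTail hz.not_gt, eLpNorm_neg]
    exact eLpNorm_hardyTail_le (by rw [sub_re, one_re]; linarith) hφ

theorem memLp_Y₁ (hφ : MemLp φ 2 (volume.restrict (Ioi 0))) (hz : z.re ≠ 1 / 2) :
    MemLp (Y₁ φ z) 2 (volume.restrict (Ioi 0)) := by
  rcases hz.lt_or_gt with hz | hz
  · rw [Y₁_eq_neg_hardyTail hz]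
    exact (memLp_hardyTail (by rw [neg_re]; linarith) hφ).neg
  · rw [Y₁_eq_hardyHead hz.not_gt]
    exact memLp_hardyHead (by rw [neg_re]; linarith) hφ

theorem memLp_Y₂ (hφ : MemLp φ 2 (volume.restrict (Ioi 0))) (hz : z.re ≠ 1 / 2) :
    MemLp (Y₂ φ z) 2 (volume.restrict (Ioi 0)) := by
  rcases hz.lt_or_gt with hz | hz
  · rw [Y₂_eq_hardyHead hz]
    exact memLp_hardyHead (by rw [sub_re, one_re]; linarith) hφ
  · rw [Y₂_eq_neg_hardyTail hz.not_gt]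
    exact (memLp_hardyTail (by rw [sub_re, one_re]; linarith) hφ).neg

end Y

/-- for `φ, ψ ∈ L¹∘(0,∞) ∩ L²(0,∞)` and `Re z ≠ 1/2`:
(i) the defining integrals converge absolutely with
`|y₁ᶻ(x)| ≤ ‖φ‖_{L¹∘} x^{−1/2}`, `|y₂ᶻ(x)| ≤ ‖ψ‖_{L¹∘} x^{−1/2}`;
(ii) `y₁ᶻ, y₂ᶻ ∈ L²(0,∞)` with norms bounded by `(2/|Re z − 1/2|)` times
`‖φ‖₂`, `‖ψ‖₂` respectively. -/
theorem statement_3 (φ ψ : ℝ → ℂ)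
    (hφ1 : MemL1c φ) (hψ1 : MemL1c ψ)
    (hφ2 : MemLp φ 2 (volume.restrict (Ioi 0)))
    (hψ2 : MemLp ψ 2 (volume.restrict (Ioi 0)))
    (z : ℂ) (hz : z.re ≠ 1/2) :
    ((z.re < 1/2 → ∀ x ∈ Ioi (0:ℝ),
        IntegrableOn (fun s => ((x / s : ℝ) : ℂ) ^ (-z) * φ s / (s : ℂ)) (Ioi x) volume ∧
        IntegrableOn (fun s => ((x / s : ℝ) : ℂ) ^ (z - 1) * ψ s / (s : ℂ)) (Ioo 0 x) volume) ∧
     (1/2 < z.re → ∀ x ∈ Ioi (0:ℝ),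
        IntegrableOn (fun s => ((x / s : ℝ) : ℂ) ^ (-z) * φ s / (s : ℂ)) (Ioo 0 x) volume ∧
        IntegrableOn (fun s => ((x / s : ℝ) : ℂ) ^ (z - 1) * ψ s / (s : ℂ)) (Ioi x) volume)) ∧
    (∀ x ∈ Ioi (0:ℝ),
      ‖Y₁ φ z x‖ ≤ l1cNorm φ / Real.sqrt x ∧ ‖Y₂ ψ z x‖ ≤ l1cNorm ψ / Real.sqrt x) ∧
    MemLp (Y₁ φ z) 2 (volume.restrict (Ioi 0)) ∧
    MemLp (Y₂ ψ z) 2 (volume.restrict (Ioi 0)) ∧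
    eLpNorm (Y₁ φ z) 2 (volume.restrict (Ioi 0)) ≤
      ENNReal.ofReal (2 / |z.re - 1/2|) * eLpNorm φ 2 (volume.restrict (Ioi 0)) ∧
    eLpNorm (Y₂ ψ z) 2 (volume.restrict (Ioi 0)) ≤
      ENNReal.ofReal (2 / |z.re - 1/2|) * eLpNorm ψ 2 (volume.restrict (Ioi 0)) := by
  have hconst : ∀ c : ℝ≥0∞,
      ENNReal.ofReal (1 / |z.re - 1 / 2|) * c ≤ ENNReal.ofReal (2 / |z.re - 1 / 2|) * c :=
    fun c => by gcongr; norm_num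
  refine ⟨⟨fun hlt x hx => ⟨?_, ?_⟩, fun hgt x hx => ⟨?_, ?_⟩⟩,
    fun x hx => ⟨norm_Y₁_le hφ1 hx, norm_Y₂_le hψ1 hx⟩, memLp_Y₁ hφ2 hz, memLp_Y₂ hψ2 hz,
    (eLpNorm_Y₁_le hφ2.1 hz).trans (hconst _), (eLpNorm_Y₂_le hψ2.1 hz).trans (hconst _)⟩
  · exact integrableOn_hardyIntegrand_Ioi (by rw [neg_re]; linarith) hφ1 hx
  · exact integrableOn_hardyIntegrand_Ioo (by rw [sub_re, one_re]; linarith) hψ1 hx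
  · exact integrableOn_hardyIntegrand_Ioo (by rw [neg_re]; linarith) hφ1 hx
  · exact integrableOn_hardyIntegrand_Ioi (by rw [sub_re, one_re]; linarith) hψ1 hx
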